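/- Let A^S be a real symmetric 3×3 matrix and b ∈ ℝ³. Let n̂ : [0,T] → ℝ³ be differentiable with |n̂(t)| = 1 for all t, and let r : [0,T] → (0,1] be differentiable and satisfy r′(t) = n̂(t)·b + r(t)( n̂(t)·(A^S n̂(t)) − tr(A^S) ). Define the control u(t) = (1/2) ( n̂(t) × n̂′(t) − (1/r(t)) n̂(t) × b − n̂(t) × (A^S n̂(t)) ). Then the function n(t) := r(t) n̂(t) satisfies n′(t) = b + 2 u(t) × n(t) + (A^S − tr(A^S) I) n(t) for all t ∈ [0,T]. -/

import Mathlib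

open Matrix

/-- The cross product on ℝ³. -/
def cross (u v : Fin 3 → ℝ) : Fin 3 → ℝ :=
  ![u 1 * v 2 - u 2 * v 1, u 2 * v 0 - u 0 * v 2, u 0 * v 1 - u 1 * v 0]

/-- The Euclidean dot product on ℝ³. -/
def dot (u v : Fin 3 → ℝ) : ℝ := ∑ j, u j * v j

/-! Differentiating `|n̂|² = 1` gives `n̂ ⬝ n̂′ = 0`, and the vector triple product expansion
gives `(n̂ × w) × n̂ = w - (n̂ ⬝ w) n̂` for a unit vector `n̂`. Hence `2 u × (r n̂)` equals `r n̂′`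
minus the components of `b` and `r Aˢ n̂` orthogonal to `n̂`, so the Bloch field at `r n̂` is
`r n̂′` plus a radial part, which is `r′ n̂` by the equation for `r`. -/

theorem HasDerivWithinAt.dotProduct_eq_zero_of_dotProduct_self_eq {ι : Type*} [Fintype ι]
    {f : ℝ → ι → ℝ} {f' : ι → ℝ} {s : Set ℝ} {t c : ℝ}
    (hf : HasDerivWithinAt f f' s t) (hc : ∀ x ∈ s, f x ⬝ᵥ f x = c) (ht : t ∈ s)
    (hs : UniqueDiffWithinAt ℝ s t) : f t ⬝ᵥ f' = 0 := by
  have hsq : HasDerivWithinAt (fun x => f x ⬝ᵥ f x) (2 * (f t ⬝ᵥ f')) s t :=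
    (HasDerivWithinAt.fun_sum (u := Finset.univ) fun i _ =>
      (hasDerivWithinAt_pi.1 hf i).mul (hasDerivWithinAt_pi.1 hf i)).congr_deriv <| by
        simp only [dotProduct, Finset.mul_sum]
        exact Finset.sum_congr rfl fun i _ => by ring
  have hconst : HasDerivWithinAt (fun x => f x ⬝ᵥ f x) 0 s t :=
    (hasDerivWithinAt_const t s c).congr hc (hc t ht)
  simpa using hs.eq_deriv s hsq hconst

def blochField (A : Matrix (Fin 3) (Fin 3) ℝ) (b u n : Fin 3 → ℝ) : Fin 3 → ℝ :=
  b + (2 : ℝ) • u ⨯₃ n + (A *ᵥ n - A.trace • n)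

/-- The control `u(t)`, evaluated with `a = n̂(t)`, `v = n̂′(t)` and `r = r(t)`. -/
noncomputable def radiusControl (A : Matrix (Fin 3) (Fin 3) ℝ) (b a v : Fin 3 → ℝ) (r : ℝ) :
    Fin 3 → ℝ :=
  (1 / 2 : ℝ) • (a ⨯₃ v - (1 / r) • a ⨯₃ b - a ⨯₃ (A *ᵥ a))

theorem blochField_radiusControl {A : Matrix (Fin 3) (Fin 3) ℝ} {b a v : Fin 3 → ℝ} {r r' : ℝ}
    (ha : a ⬝ᵥ a = 1) (hav : a ⬝ᵥ v = 0) (hr : r ≠ 0)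
    (hr' : r' = a ⬝ᵥ b + r * (a ⬝ᵥ A *ᵥ a - A.trace)) :
    blochField A b (radiusControl A b a v r) (r • a) = r' • a + r • v := by
  simp only [blochField, radiusControl, map_sub, map_smul, LinearMap.sub_apply,
    LinearMap.smul_apply, cross_cross_eq_smul_sub_smul, ha, one_smul, Matrix.mulVec_smul,
    dotProduct_comm _ a, hav]
  linear_combination (norm := module) (-hr') • a - mul_inv_cancel₀ hr • (b - (a ⬝ᵥ b) • a)

theorem control_realizes_radius_path_general
    (AS : Matrix (Fin 3) (Fin 3) ℝ) (b : Fin 3 → ℝ)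
    (T : ℝ)
    (nh nh' : ℝ → Fin 3 → ℝ) (r r' : ℝ → ℝ)
    (hnh : ∀ t ∈ Set.Icc 0 T, ∀ j,
      HasDerivWithinAt (fun s => nh s j) (nh' t j) (Set.Icc 0 T) t)
    (hunit : ∀ t ∈ Set.Icc 0 T, dot (nh t) (nh t) = 1)
    (hr : ∀ t ∈ Set.Icc 0 T, HasDerivWithinAt r (r' t) (Set.Icc 0 T) t)
    (hrange : ∀ t ∈ Set.Icc 0 T, r t ∈ Set.Ioc (0 : ℝ) 1)
    (hODE : ∀ t ∈ Set.Icc 0 T,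
      r' t = dot (nh t) b + r t * (dot (nh t) (AS.mulVec (nh t)) - AS.trace))
    (u : ℝ → Fin 3 → ℝ)
    (hu : ∀ t, u t = fun j => (1/2) *
      (cross (nh t) (nh' t) j - (1 / r t) * cross (nh t) b j
        - cross (nh t) (AS.mulVec (nh t)) j)) :
    ∀ t ∈ Set.Icc 0 T, ∀ j,
      HasDerivWithinAt (fun s => r s * nh s j)
        (b j + 2 * cross (u t) (fun i => r t * nh t i) j
          + (AS.mulVec (fun i => r t * nh t i) j - AS.trace * (r t * nh t j)))
        (Set.Icc 0 T) t := by
  intro t ht j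
  obtain hT | rfl := (ht.1.trans ht.2).lt_or_eq
  · have horth : nh t ⬝ᵥ nh' t = 0 :=
      (hasDerivWithinAt_pi.2 (hnh t ht)).dotProduct_eq_zero_of_dotProduct_self_eq hunit ht
        (uniqueDiffOn_Icc hT t ht)
    have hbloch := blochField_radiusControl (A := AS) (b := b) (hunit t ht) horth
      (hrange t ht).1.ne' (hODE t ht)
    rw [hu]
    exact ((hr t ht).mul (hnh t ht j)).congr_deriv (congrFun hbloch j).symm
  · rw [Set.Icc_self] at ht ⊢
    exact HasFDerivWithinAt.singleton

/-- Given a unit-vector control path n̂ and a radius path r solving the projected equation,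
the choice of Hamiltonian control
u = (1/2)(n̂ × n̂′ − (1/r) n̂ × b − n̂ × (Aˢ n̂)) makes n = r n̂ solve the Bloch equation
n′ = b + 2 u × n + (Aˢ − tr(Aˢ) I) n on [0,T]. -/
theorem control_realizes_radius_path
    (AS : Matrix (Fin 3) (Fin 3) ℝ) (hsymm : AS.IsSymm) (b : Fin 3 → ℝ)
    (T : ℝ) (hT : 0 ≤ T)
    (nh nh' : ℝ → Fin 3 → ℝ) (r r' : ℝ → ℝ)
    (hnh : ∀ t ∈ Set.Icc 0 T, ∀ j,
      HasDerivWithinAt (fun s => nh s j) (nh' t j) (Set.Icc 0 T) t)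
    (hunit : ∀ t ∈ Set.Icc 0 T, dot (nh t) (nh t) = 1)
    (hr : ∀ t ∈ Set.Icc 0 T, HasDerivWithinAt r (r' t) (Set.Icc 0 T) t)
    (hrange : ∀ t ∈ Set.Icc 0 T, r t ∈ Set.Ioc (0 : ℝ) 1)
    (hODE : ∀ t ∈ Set.Icc 0 T,
      r' t = dot (nh t) b + r t * (dot (nh t) (AS.mulVec (nh t)) - AS.trace))
    (u : ℝ → Fin 3 → ℝ)
    (hu : ∀ t, u t = fun j => (1/2) *
      (cross (nh t) (nh' t) j - (1 / r t) * cross (nh t) b j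
        - cross (nh t) (AS.mulVec (nh t)) j)) :
    ∀ t ∈ Set.Icc 0 T, ∀ j,
      HasDerivWithinAt (fun s => r s * nh s j)
        (b j + 2 * cross (u t) (fun i => r t * nh t i) j
          + (AS.mulVec (fun i => r t * nh t i) j - AS.trace * (r t * nh t j)))
        (Set.Icc 0 T) t :=
  control_realizes_radius_path_general AS b T nh nh' r r' hnh hunit hr hrange hODE u hu
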